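/- Let φ(z) = max(0, z) be applied entrywise, let X ∈ ℝ^{n×d} be nonzero, and let W ∈ ℝ^{m×d} with m ≥ d have full rank d. Then ‖φ(W Xᵀ)‖_F² / (‖φ(W Xᵀ)‖₂ + ‖φ(−W Xᵀ)‖₂)² ≤ (‖W‖₂²/σ_min(W)²) · Tr(X Xᵀ)/λ_1(X Xᵀ), where σ_min(W) denotes the smallest singular value of W. -/

import Mathlib

open Matrix

/-- The largest eigenvalue of a symmetric matrix, expressed as the supremum of the
Rayleigh quotient over the unit sphere. -/
noncomputable def lamMax {n : ℕ} (A : Matrix (Fin n) (Fin n) ℝ) : ℝ :=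
  sSup {t | ∃ u : Fin n → ℝ, (∑ i, u i ^ 2) = 1 ∧ t = ∑ i, ∑ j, u i * A i j * u j}

/-- Operator (spectral) norm of a rectangular real matrix. -/
noncomputable def opNorm {m n : ℕ} (A : Matrix (Fin m) (Fin n) ℝ) : ℝ :=
  sSup {t | ∃ u : Fin n → ℝ, (∑ j, u j ^ 2) = 1 ∧
    t = Real.sqrt (∑ i, (∑ j, A i j * u j) ^ 2)}

/-- Smallest singular value of a rectangular real matrix. -/
noncomputable def sigMin {m n : ℕ} (A : Matrix (Fin m) (Fin n) ℝ) : ℝ :=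
  sInf {t | ∃ u : Fin n → ℝ, (∑ j, u j ^ 2) = 1 ∧
    t = Real.sqrt (∑ i, (∑ j, A i j * u j) ^ 2)}

/-- Squared Frobenius norm. -/
def frobSq {m n : ℕ} (A : Matrix (Fin m) (Fin n) ℝ) : ℝ := ∑ i, ∑ j, (A i j) ^ 2

/-- Entrywise ReLU. -/
def reluM {m n : ℕ} (A : Matrix (Fin m) (Fin n) ℝ) : Matrix (Fin m) (Fin n) ℝ :=
  A.map fun z => max 0 z

namespace OuterReluAux

def opSet {p q : ℕ} (A : Matrix (Fin p) (Fin q) ℝ) : Set ℝ :=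
  {t | ∃ u : Fin q → ℝ, (∑ j, u j ^ 2) = 1 ∧
    t = Real.sqrt (∑ i, (∑ j, A i j * u j) ^ 2)}

lemma opNorm_eq {p q : ℕ} (A : Matrix (Fin p) (Fin q) ℝ) : opNorm A = sSup (opSet A) := rfl

lemma lamMax_eq {n : ℕ} (A : Matrix (Fin n) (Fin n) ℝ) :
    lamMax A = sSup {t | ∃ u : Fin n → ℝ, (∑ i, u i ^ 2) = 1 ∧
      t = ∑ i, ∑ j, u i * A i j * u j} := rfl
lemma sigMin_eq {p q : ℕ} (A : Matrix (Fin p) (Fin q) ℝ) : sigMin A = sInf (opSet A) := rfl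

lemma mem_opSet {p q : ℕ} (A : Matrix (Fin p) (Fin q) ℝ) {u : Fin q → ℝ}
    (hu : (∑ j, u j ^ 2) = 1) :
    Real.sqrt (∑ i, (∑ j, A i j * u j) ^ 2) ∈ opSet A := ⟨u, hu, rfl⟩

lemma opSet_nonneg {p q : ℕ} (A : Matrix (Fin p) (Fin q) ℝ) :
    ∀ t ∈ opSet A, 0 ≤ t := by
  rintro t ⟨u, -, rfl⟩; exact Real.sqrt_nonneg _

lemma bddAbove_opSet {p q : ℕ} (A : Matrix (Fin p) (Fin q) ℝ) : BddAbove (opSet A) := by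
  refine ⟨Real.sqrt (frobSq A), ?_⟩
  rintro t ⟨u, hu, rfl⟩
  apply Real.sqrt_le_sqrt
  apply Finset.sum_le_sum
  intro i _
  calc (∑ j, A i j * u j) ^ 2 ≤ (∑ j, (A i j) ^ 2) * (∑ j, u j ^ 2) :=
        Finset.sum_mul_sq_le_sq_mul_sq _ _ _
    _ = ∑ j, (A i j) ^ 2 := by rw [hu, mul_one]

lemma le_opNorm {p q : ℕ} (A : Matrix (Fin p) (Fin q) ℝ) {u : Fin q → ℝ}
    (hu : (∑ j, u j ^ 2) = 1) :
    Real.sqrt (∑ i, (∑ j, A i j * u j) ^ 2) ≤ opNorm A :=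
  le_csSup (bddAbove_opSet A) (mem_opSet A hu)

lemma opNorm_nonneg {p q : ℕ} (A : Matrix (Fin p) (Fin q) ℝ) : 0 ≤ opNorm A :=
  Real.sSup_nonneg (opSet_nonneg A)

lemma sigMin_nonneg {p q : ℕ} (A : Matrix (Fin p) (Fin q) ℝ) : 0 ≤ sigMin A :=
  Real.sInf_nonneg (opSet_nonneg A)

lemma sigMin_le {p q : ℕ} (A : Matrix (Fin p) (Fin q) ℝ) {u : Fin q → ℝ}
    (hu : (∑ j, u j ^ 2) = 1) :
    sigMin A ≤ Real.sqrt (∑ i, (∑ j, A i j * u j) ^ 2) :=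
  csInf_le ⟨0, fun t ht => opSet_nonneg A t ht⟩ (mem_opSet A hu)

lemma single_unit {q : ℕ} (i : Fin q) :
    (∑ j, (Pi.single (M := fun _ => ℝ) i 1) j ^ 2) = 1 := by
  simp [Pi.single_apply]

lemma sum_sq_mulvec_le {p q : ℕ} (A : Matrix (Fin p) (Fin q) ℝ) (v : Fin q → ℝ) :
    ∑ i, (∑ j, A i j * v j) ^ 2 ≤ opNorm A ^ 2 * ∑ j, v j ^ 2 := by
  by_cases hv : (∑ j, v j ^ 2) = 0
  · have hz : ∀ j, v j = 0 := by
      intro j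
      have := (Finset.sum_eq_zero_iff_of_nonneg
        (fun j _ => sq_nonneg (v j))).mp hv j (Finset.mem_univ j)
      exact pow_eq_zero_iff two_ne_zero |>.mp this
    have hz2 : ∀ i, (∑ j, A i j * v j) = 0 := fun i =>
      Finset.sum_eq_zero fun j _ => by rw [hz j, mul_zero]
    simp [hz2, hv]
  · have hs : 0 < ∑ j, v j ^ 2 :=
      lt_of_le_of_ne (Finset.sum_nonneg fun j _ => sq_nonneg _) (Ne.symm hv)
    set c := Real.sqrt (∑ j, v j ^ 2) with hc
    have hcpos : 0 < c := Real.sqrt_pos.mpr hs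
    have hc2 : c ^ 2 = ∑ j, v j ^ 2 := Real.sq_sqrt hs.le
    set u : Fin q → ℝ := fun j => v j / c with hudef
    have hu : (∑ j, u j ^ 2) = 1 := by
      simp only [hudef, div_pow]
      rw [← Finset.sum_div, ← hc2]
      field_simp
    have h1 := le_opNorm A hu
    have h2 : (∑ i, (∑ j, A i j * u j) ^ 2) = (∑ i, (∑ j, A i j * v j) ^ 2) / c ^ 2 := by
      rw [Finset.sum_div]
      refine Finset.sum_congr rfl fun i _ => ?_
      rw [← div_pow]
      congr 1
      rw [Finset.sum_div]
      exact Finset.sum_congr rfl fun j _ => by rw [hudef]; ring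
    have h3 : (∑ i, (∑ j, A i j * u j) ^ 2) ≤ opNorm A ^ 2 := by
      have := pow_le_pow_left₀ (Real.sqrt_nonneg _) h1 2
      rwa [Real.sq_sqrt (Finset.sum_nonneg fun i _ => sq_nonneg _)] at this
    rw [h2, div_le_iff₀ (by positivity)] at h3
    calc ∑ i, (∑ j, A i j * v j) ^ 2 ≤ opNorm A ^ 2 * c ^ 2 := h3
      _ = _ := by rw [hc2]

lemma le_sum_sq_mulvec {p q : ℕ} (A : Matrix (Fin p) (Fin q) ℝ) (v : Fin q → ℝ) :
    sigMin A ^ 2 * ∑ j, v j ^ 2 ≤ ∑ i, (∑ j, A i j * v j) ^ 2 := by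
  by_cases hv : (∑ j, v j ^ 2) = 0
  · simp [hv]
    positivity
  · have hs : 0 < ∑ j, v j ^ 2 :=
      lt_of_le_of_ne (Finset.sum_nonneg fun j _ => sq_nonneg _) (Ne.symm hv)
    set c := Real.sqrt (∑ j, v j ^ 2) with hc
    have hcpos : 0 < c := Real.sqrt_pos.mpr hs
    have hc2 : c ^ 2 = ∑ j, v j ^ 2 := Real.sq_sqrt hs.le
    set u : Fin q → ℝ := fun j => v j / c with hudef
    have hu : (∑ j, u j ^ 2) = 1 := by
      simp only [hudef, div_pow]
      rw [← Finset.sum_div, ← hc2]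
      field_simp
    have h1 := sigMin_le A hu
    have h2 : (∑ i, (∑ j, A i j * u j) ^ 2) = (∑ i, (∑ j, A i j * v j) ^ 2) / c ^ 2 := by
      rw [Finset.sum_div]
      refine Finset.sum_congr rfl fun i _ => ?_
      rw [← div_pow]
      congr 1
      rw [Finset.sum_div]
      exact Finset.sum_congr rfl fun j _ => by rw [hudef]; ring
    have h3 : sigMin A ^ 2 ≤ (∑ i, (∑ j, A i j * u j) ^ 2) := by
      have := pow_le_pow_left₀ (sigMin_nonneg A) h1 2
      rwa [Real.sq_sqrt (Finset.sum_nonneg fun i _ => sq_nonneg _)] at this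
    rw [h2, le_div_iff₀ (by positivity)] at h3
    calc sigMin A ^ 2 * ∑ j, v j ^ 2 = sigMin A ^ 2 * c ^ 2 := by rw [hc2]
      _ ≤ _ := h3

lemma sqrt_sub_tri {p : ℕ} (f g : Fin p → ℝ) :
    Real.sqrt (∑ i, (f i - g i) ^ 2) ≤
      Real.sqrt (∑ i, f i ^ 2) + Real.sqrt (∑ i, g i ^ 2) := by
  have key : ∀ h : Fin p → ℝ, Real.sqrt (∑ i, h i ^ 2) =
      ‖(WithLp.equiv 2 (Fin p → ℝ)).symm h‖ := by
    intro h
    rw [EuclideanSpace.norm_eq]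
    simp [Real.norm_eq_abs, sq_abs]
  have h2 : (WithLp.equiv 2 (Fin p → ℝ)).symm (f - g)
      = (WithLp.equiv 2 (Fin p → ℝ)).symm f - (WithLp.equiv 2 (Fin p → ℝ)).symm g := by simp
  have h3 : (∑ i, (f i - g i) ^ 2) = ∑ i, (f - g) i ^ 2 := rfl
  rw [h3, key (f - g), h2, key f, key g]
  exact norm_sub_le _ _

lemma sigMin_pos {p q : ℕ} (A : Matrix (Fin p) (Fin q) ℝ) (hq : 0 < q)
    (hinj : ∀ u : Fin q → ℝ, A.mulVec u = 0 → u = 0) : 0 < sigMin A := by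
  set S : Set (Fin q → ℝ) := {u | (∑ j, u j ^ 2) = 1} with hS
  have hgc : Continuous fun u : Fin q → ℝ => ∑ j, u j ^ 2 :=
    continuous_finset_sum _ fun j _ => (continuous_apply j).pow 2
  have hScl : IsClosed S := isClosed_eq hgc continuous_const
  have hSb : Bornology.IsBounded S := by
    apply (Metric.isBounded_closedBall (x := (0 : Fin q → ℝ)) (r := 1)).subset
    intro u hu
    rw [Metric.mem_closedBall, dist_zero_right]
    rw [pi_norm_le_iff_of_nonneg zero_le_one]
    intro j
    rw [Real.norm_eq_abs]
    refine (sq_le_one_iff_abs_le_one (u j)).mp ?_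
    calc u j ^ 2 ≤ ∑ k, u k ^ 2 :=
          Finset.single_le_sum (fun k _ => sq_nonneg (u k)) (Finset.mem_univ j)
      _ = 1 := hu
  have hScomp : IsCompact S := Metric.isCompact_of_isClosed_isBounded hScl hSb
  have hSne : S.Nonempty := ⟨Pi.single (M := fun _ => ℝ) ⟨0, hq⟩ 1, single_unit _⟩
  set f : (Fin q → ℝ) → ℝ := fun u => ∑ i, (∑ j, A i j * u j) ^ 2 with hf
  have hfc : Continuous f := continuous_finset_sum _ fun i _ =>
    (continuous_finset_sum _ fun j _ => (continuous_const.mul (continuous_apply j))).pow 2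
  obtain ⟨u₀, hu₀S, hmin⟩ := hScomp.exists_isMinOn hSne hfc.continuousOn
  have hfu0 : f u₀ ≠ 0 := by
    intro h0
    have hz : ∀ i, (∑ j, A i j * u₀ j) = 0 := by
      intro i
      have := (Finset.sum_eq_zero_iff_of_nonneg
        (fun i _ => sq_nonneg _)).mp h0 i (Finset.mem_univ i)
      exact pow_eq_zero_iff two_ne_zero |>.mp this
    have hm : A.mulVec u₀ = 0 := funext fun i => by
      simpa [Matrix.mulVec, dotProduct] using hz i
    have := hinj u₀ hm
    rw [hS] at hu₀S
    simp only [Set.mem_setOf_eq, this] at hu₀S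
    simp at hu₀S
  have hfpos : 0 < f u₀ :=
    (Finset.sum_nonneg fun i _ => sq_nonneg _).lt_of_ne (Ne.symm hfu0)
  have hge : Real.sqrt (f u₀) ≤ sigMin A := by
    apply le_csInf
    · exact ⟨_, mem_opSet A (single_unit (⟨0, hq⟩ : Fin q))⟩
    · rintro t ⟨u, hu, rfl⟩
      exact Real.sqrt_le_sqrt (hmin hu)
  exact lt_of_lt_of_le (Real.sqrt_pos.mpr hfpos) hge

lemma rayleigh_eq {n d : ℕ} (X : Matrix (Fin n) (Fin d) ℝ) (u : Fin n → ℝ) :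
    (∑ i, ∑ j, u i * (X * Xᵀ) i j * u j) = ∑ k, (∑ i, X i k * u i) ^ 2 := by
  calc (∑ i, ∑ j, u i * (X * Xᵀ) i j * u j)
      = ∑ i, ∑ j, ∑ k, (X i k * u i) * (X j k * u j) := by
        refine Finset.sum_congr rfl fun i _ => Finset.sum_congr rfl fun j _ => ?_
        rw [Matrix.mul_apply]
        simp only [Matrix.transpose_apply]
        rw [Finset.mul_sum, Finset.sum_mul]
        exact Finset.sum_congr rfl fun k _ => by ring
    _ = ∑ i, ∑ k, ∑ j, (X i k * u i) * (X j k * u j) :=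
        Finset.sum_congr rfl fun i _ => Finset.sum_comm
    _ = ∑ k, ∑ i, ∑ j, (X i k * u i) * (X j k * u j) := Finset.sum_comm
    _ = ∑ k, (∑ i, X i k * u i) ^ 2 := by
        refine Finset.sum_congr rfl fun k _ => ?_
        rw [sq, Finset.sum_mul_sum]

end OuterReluAux

open OuterReluAux

/-- For ReLU applied entrywise, `X ≠ 0`, and `W ∈ ℝ^{m×d}` of full rank `d` with `m ≥ d`:
`‖φ(WXᵀ)‖_F² / (‖φ(WXᵀ)‖₂ + ‖φ(−WXᵀ)‖₂)² ≤ (‖W‖₂²/σ_min(W)²) · Tr(XXᵀ)/λ₁(XXᵀ)`. -/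
theorem outer_relu_bound
    (n d m : ℕ) (X : Matrix (Fin n) (Fin d) ℝ) (hX : X ≠ 0)
    (W : Matrix (Fin m) (Fin d) ℝ) (hmd : d ≤ m) (hrank : W.rank = d) :
    frobSq (reluM (W * Xᵀ)) /
        (opNorm (reluM (W * Xᵀ)) + opNorm (reluM (-(W * Xᵀ)))) ^ 2 ≤
      opNorm W ^ 2 / sigMin W ^ 2 * ((X * Xᵀ).trace / lamMax (X * Xᵀ)) := by
  obtain ⟨i₀, k₀, hik⟩ : ∃ i k, X i k ≠ 0 := by
    by_contra h; push_neg at h; exact hX (by ext i k; simpa using h i k)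
  have hd : 0 < d := k₀.pos
  have hn : 0 < n := i₀.pos
  -- injectivity of W from full rank
  have hinj : ∀ u : Fin d → ℝ, W.mulVec u = 0 → u = 0 := by
    have h1 := LinearMap.finrank_range_add_finrank_ker W.mulVecLin
    rw [Module.finrank_pi, Fintype.card_fin] at h1
    have hr : Matrix.rank W = Module.finrank ℝ (LinearMap.range W.mulVecLin) := rfl
    rw [← hr, hrank] at h1
    have h2 : Module.finrank ℝ (LinearMap.ker W.mulVecLin) = 0 := by omega
    have h3 : LinearMap.ker W.mulVecLin = ⊥ := Submodule.finrank_eq_zero.mp h2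
    intro u hu
    have h4 : W.mulVecLin u = 0 := by simpa [Matrix.mulVecLin_apply] using hu
    exact (LinearMap.ker_eq_bot.mp h3) (by simpa using h4)
  have hsig : 0 < sigMin W := sigMin_pos W hd hinj
  -- trace formula and nonnegativity
  have hTr : (X * Xᵀ).trace = ∑ k, ∑ j, X k j ^ 2 := by
    simp [Matrix.trace, Matrix.diag, Matrix.mul_apply, sq]
  have hTr_nonneg : 0 ≤ (X * Xᵀ).trace := by
    rw [hTr]; positivity
  -- (W Xᵀ) u = W (Xᵀ u)
  have hAu : ∀ (u : Fin n → ℝ) (i : Fin m),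
      (∑ k, (W * Xᵀ) i k * u k) = ∑ j, W i j * (∑ k, X k j * u k) := by
    intro u i
    simp only [Matrix.mul_apply, Matrix.transpose_apply]
    calc ∑ k, (∑ j, W i j * X k j) * u k
        = ∑ k, ∑ j, W i j * (X k j * u k) := by
          refine Finset.sum_congr rfl fun k _ => ?_
          rw [Finset.sum_mul]
          exact Finset.sum_congr rfl fun j _ => by ring
      _ = ∑ j, ∑ k, W i j * (X k j * u k) := Finset.sum_comm
      _ = ∑ j, W i j * (∑ k, X k j * u k) :=
          Finset.sum_congr rfl fun j _ => (Finset.mul_sum _ _ _).symm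
  -- Frobenius bound: ‖WXᵀ‖_F² ≤ ‖W‖₂² Tr(XXᵀ)
  have hfrobA : frobSq (W * Xᵀ) ≤ opNorm W ^ 2 * (X * Xᵀ).trace := by
    rw [hTr, frobSq, Finset.sum_comm]
    calc ∑ k, ∑ i, ((W * Xᵀ) i k) ^ 2
        ≤ ∑ k, (opNorm W ^ 2 * ∑ j, X k j ^ 2) := by
          refine Finset.sum_le_sum fun k _ => ?_
          have := sum_sq_mulvec_le W (fun j => X k j)
          simpa [Matrix.mul_apply, Matrix.transpose_apply] using this
      _ = opNorm W ^ 2 * ∑ k, ∑ j, X k j ^ 2 := (Finset.mul_sum _ _ _).symm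
  -- ReLU facts
  have hrelu_sub : ∀ a : ℝ, max 0 a - max 0 (-a) = a := by
    intro a
    rcases le_total a 0 with h | h
    · rw [max_eq_left h, max_eq_right (neg_nonneg.mpr h)]; ring
    · rw [max_eq_right h, max_eq_left (neg_nonpos.mpr h)]; ring
  have hfrobR : frobSq (reluM (W * Xᵀ)) ≤ frobSq (W * Xᵀ) := by
    simp only [frobSq, reluM, Matrix.map_apply]
    refine Finset.sum_le_sum fun i _ => Finset.sum_le_sum fun k _ => ?_
    rcases le_total ((W * Xᵀ) i k) 0 with h | h
    · rw [max_eq_left h]; simpa using sq_nonneg ((W * Xᵀ) i k)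
    · rw [max_eq_right h]
  -- triangle inequality for opNorm
  have htri : opNorm (W * Xᵀ) ≤ opNorm (reluM (W * Xᵀ)) + opNorm (reluM (-(W * Xᵀ))) := by
    rw [opNorm_eq (W * Xᵀ)]
    apply csSup_le ⟨_, mem_opSet _ (single_unit i₀)⟩
    rintro t ⟨u, hu, rfl⟩
    have hdecomp : ∀ i : Fin m, (∑ k, (W * Xᵀ) i k * u k)
        = (∑ k, reluM (W * Xᵀ) i k * u k) - (∑ k, reluM (-(W * Xᵀ)) i k * u k) := by
      intro i
      rw [← Finset.sum_sub_distrib]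
      refine Finset.sum_congr rfl fun k _ => ?_
      simp only [reluM, Matrix.map_apply, Matrix.neg_apply]
      rw [← sub_mul, hrelu_sub]
    calc Real.sqrt (∑ i, (∑ k, (W * Xᵀ) i k * u k) ^ 2)
        = Real.sqrt (∑ i, ((∑ k, reluM (W * Xᵀ) i k * u k)
            - (∑ k, reluM (-(W * Xᵀ)) i k * u k)) ^ 2) := by
          congr 1
          exact Finset.sum_congr rfl fun i _ => by rw [hdecomp i]
      _ ≤ Real.sqrt (∑ i, (∑ k, reluM (W * Xᵀ) i k * u k) ^ 2)
            + Real.sqrt (∑ i, (∑ k, reluM (-(W * Xᵀ)) i k * u k) ^ 2) :=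
          sqrt_sub_tri _ _
      _ ≤ _ := add_le_add (le_opNorm _ hu) (le_opNorm _ hu)
  -- λ₁ is positive
  have hray_bdd : BddAbove {t | ∃ u : Fin n → ℝ, (∑ i, u i ^ 2) = 1 ∧
      t = ∑ i, ∑ j, u i * (X * Xᵀ) i j * u j} := by
    refine ⟨frobSq X, ?_⟩
    rintro t ⟨u, hu, rfl⟩
    rw [rayleigh_eq]
    calc ∑ k, (∑ i, X i k * u i) ^ 2
        ≤ ∑ k, ((∑ i, (X i k) ^ 2) * (∑ i, u i ^ 2)) :=
          Finset.sum_le_sum fun k _ => Finset.sum_mul_sq_le_sq_mul_sq _ _ _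
      _ = ∑ k, ∑ i, (X i k) ^ 2 := by
          refine Finset.sum_congr rfl fun k _ => ?_
          rw [hu, mul_one]
      _ = frobSq X := Finset.sum_comm
  have hlam_pos : 0 < lamMax (X * Xᵀ) := by
    set u : Fin n → ℝ := Pi.single (M := fun _ => ℝ) i₀ 1 with hudef
    have hu : (∑ i, u i ^ 2) = 1 := single_unit i₀
    have hval : (∑ i, ∑ j, u i * (X * Xᵀ) i j * u j) = ∑ k, (X i₀ k) ^ 2 := by
      rw [rayleigh_eq]
      refine Finset.sum_congr rfl fun k _ => ?_
      congr 1
      simp [hudef, Pi.single_apply, mul_ite]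
    have hmem := le_csSup hray_bdd ⟨u, hu, rfl⟩
    have hvpos : 0 < ∑ i, ∑ j, u i * (X * Xᵀ) i j * u j := by
      rw [hval]
      have : (0:ℝ) < (X i₀ k₀) ^ 2 := by positivity
      calc (0:ℝ) < (X i₀ k₀) ^ 2 := this
        _ ≤ ∑ k, (X i₀ k) ^ 2 :=
            Finset.single_le_sum (f := fun k => X i₀ k ^ 2)
              (fun k _ => sq_nonneg _) (Finset.mem_univ k₀)
    exact lt_of_lt_of_le hvpos hmem
  -- sigMin² λ₁ ≤ opNorm(WXᵀ)²
  have hlam_le : lamMax (X * Xᵀ) ≤ opNorm (W * Xᵀ) ^ 2 / sigMin W ^ 2 := by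
    rw [lamMax_eq]
    refine csSup_le ⟨_, ⟨Pi.single (M := fun _ => ℝ) i₀ 1, single_unit i₀, rfl⟩⟩ ?_
    rintro t ⟨u, hu, rfl⟩
    rw [rayleigh_eq, le_div_iff₀ (by positivity)]
    have h1 := le_sum_sq_mulvec W (fun j => ∑ k, X k j * u k)
    have h2 : (∑ i, (∑ j, W i j * (∑ k, X k j * u k)) ^ 2)
        = ∑ i, (∑ k, (W * Xᵀ) i k * u k) ^ 2 :=
      Finset.sum_congr rfl fun i _ => by rw [hAu u i]
    have h3 := sum_sq_mulvec_le (W * Xᵀ) u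
    rw [hu, mul_one] at h3
    calc (∑ k, (∑ i, X i k * u i) ^ 2) * sigMin W ^ 2
        = sigMin W ^ 2 * ∑ j, (∑ k, X k j * u k) ^ 2 := mul_comm _ _
      _ ≤ ∑ i, (∑ j, W i j * (∑ k, X k j * u k)) ^ 2 := h1
      _ = ∑ i, (∑ k, (W * Xᵀ) i k * u k) ^ 2 := h2
      _ ≤ opNorm (W * Xᵀ) ^ 2 := h3
  have hkey2 : sigMin W ^ 2 * lamMax (X * Xᵀ) ≤ opNorm (W * Xᵀ) ^ 2 := by
    rw [mul_comm]
    exact (le_div_iff₀ (by positivity)).mp hlam_le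
  -- assemble
  have hD : sigMin W ^ 2 * lamMax (X * Xᵀ)
      ≤ (opNorm (reluM (W * Xᵀ)) + opNorm (reluM (-(W * Xᵀ)))) ^ 2 :=
    hkey2.trans (pow_le_pow_left₀ (opNorm_nonneg _) htri 2)
  have hfinal : frobSq (reluM (W * Xᵀ)) /
        (opNorm (reluM (W * Xᵀ)) + opNorm (reluM (-(W * Xᵀ)))) ^ 2
      ≤ (opNorm W ^ 2 * (X * Xᵀ).trace) / (sigMin W ^ 2 * lamMax (X * Xᵀ)) :=
    div_le_div₀ (mul_nonneg (sq_nonneg _) hTr_nonneg) (hfrobR.trans hfrobA)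
      (mul_pos (by positivity) hlam_pos) hD
  exact hfinal.trans_eq (div_mul_div_comm _ _ _ _).symm
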